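/- For S ≥ 0 and arbitrary integer M, the sum Σ_{k ∈ ℤ} q^{k² + a·k} [M, a+k]⁺_q [S, k]⁺_q equals the extended q-binomial coefficient [M+S, S+a]⁺_q. -/

import Mathlib

/-!
Fix `M` and write `Σ(S, a)` for the left-hand side. The second Pascal rule
`[S+1, k] = [S, k] + q^(S+1-k) [S, k-1]`, followed by the shift `k ↦ k + 1` in its second part,
gives `Σ(S+1, a) = Σ(S, a) + q^(S+a+1) Σ(S, a+1)`. The right-hand side obeys the same recursion
because `[n+1, m+1]⁺ = q^(m+1) [n, m+1]⁺ + [n, m]⁺` holds for every integer `n`: for `n < 0` it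
is the first Pascal rule for `[-m-1, -n-1]` in `q⁻¹`, the prefactors matching because `(d² + d)/2`
drops by `d` when `d = n - m` drops by one. Induction on `S` from `S = 0` concludes.
-/

noncomputable section
open LaurentPolynomial

def gaussRec (v : LaurentPolynomial ℤ) : ℕ → ℕ → LaurentPolynomial ℤ
  | 0, 0 => 1
  | 0, _ + 1 => 0
  | _ + 1, 0 => 1
  | n + 1, m + 1 => gaussRec v n (m + 1) * v ^ (m + 1) + gaussRec v n m

/-- `[n m]_v` for integer indices: the Gaussian binomial in the variable `v`,
zero unless `0 ≤ m ≤ n`. -/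
def gaussZ (v : LaurentPolynomial ℤ) (n m : ℤ) : LaurentPolynomial ℤ :=
  if 0 ≤ m ∧ m ≤ n then gaussRec v n.toNat m.toNat else 0

/-- The Gaussian binomial coefficient `[n m]_q` as a Laurent polynomial in `q = T 1`. -/
def qbin (n m : ℤ) : LaurentPolynomial ℤ := gaussZ (T 1) n m

/-- The extended q-binomial coefficient `[n m]⁺_q ∈ ℤ[q,q⁻¹]`. -/
def qbinPlus (n m : ℤ) : LaurentPolynomial ℤ :=
  if 0 ≤ n then qbin n m
  else (-1) ^ (n - m).natAbs * T (-(((n - m) ^ 2 + (n - m)) / 2)) *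
    gaussZ (T (-1)) (-m - 1) (-n - 1)


section gaussRec

variable (v : LaurentPolynomial ℤ)

lemma gaussRec_zero_right (n : ℕ) : gaussRec v n 0 = 1 := by
  cases n <;> rfl

lemma gaussRec_succ_succ (n m : ℕ) :
    gaussRec v (n + 1) (m + 1) = gaussRec v n (m + 1) * v ^ (m + 1) + gaussRec v n m := rfl

lemma gaussRec_eq_zero_of_lt : ∀ {n m : ℕ}, n < m → gaussRec v n m = 0
  | 0, _ + 1, _ => rfl
  | n + 1, m + 1, h => by
    rw [gaussRec_succ_succ, gaussRec_eq_zero_of_lt (by omega), gaussRec_eq_zero_of_lt (by omega)]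
    ring

lemma gaussRec_self : ∀ n : ℕ, gaussRec v n n = 1
  | 0 => rfl
  | n + 1 => by
    rw [gaussRec_succ_succ, gaussRec_eq_zero_of_lt v (Nat.lt_succ_self n), gaussRec_self n]
    ring

lemma gaussRec_one_mul_sub_one : ∀ n : ℕ, gaussRec v n 1 * (v - 1) = v ^ n - 1
  | 0 => by rw [gaussRec_eq_zero_of_lt v zero_lt_one]; ring
  | n + 1 => by
    rw [gaussRec_succ_succ, gaussRec_zero_right]
    linear_combination v * gaussRec_one_mul_sub_one n

lemma gaussRec_succ_succ' : ∀ {n m : ℕ}, m ≤ n →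
    gaussRec v (n + 1) (m + 1) = gaussRec v n (m + 1) + v ^ (n - m) * gaussRec v n m
  | 0, 0, _ => by simp [gaussRec_succ_succ, gaussRec_eq_zero_of_lt, gaussRec_self]
  | n + 1, 0, _ => by
    rw [gaussRec_succ_succ, gaussRec_zero_right, Nat.sub_zero]
    linear_combination gaussRec_one_mul_sub_one v (n + 1)
  | n + 1, m + 1, hm => by
    rcases (Nat.le_of_succ_le_succ hm).eq_or_lt with rfl | hlt
    · simp [gaussRec_succ_succ, gaussRec_eq_zero_of_lt, gaussRec_self]
    obtain ⟨t, rfl⟩ : ∃ t, n = m + 1 + t := ⟨n - (m + 1), by omega⟩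
    have ih₁ := gaussRec_succ_succ' (n := m + 1 + t) (m := m + 1) (by omega)
    have ih₀ := gaussRec_succ_succ' (n := m + 1 + t) (m := m) (by omega)
    rw [show m + 1 + t - (m + 1) = t by omega] at ih₁
    rw [show m + 1 + t - m = t + 1 by omega] at ih₀
    rw [show m + 1 + t + 1 - (m + 1) = t + 1 by omega]
    linear_combination gaussRec_succ_succ v (m + 1 + t + 1) (m + 1) + v ^ (m + 2) * ih₁ + ih₀
      - gaussRec_succ_succ v (m + 1 + t) (m + 1) - v ^ (t + 1) * gaussRec_succ_succ v (m + 1 + t) m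

end gaussRec

lemma gaussZ_natCast (v : LaurentPolynomial ℤ) (n m : ℕ) : gaussZ v n m = gaussRec v n m := by
  rw [gaussZ]
  split_ifs with h
  · simp
  · rw [gaussRec_eq_zero_of_lt v (by omega)]

lemma gaussZ_eq_zero (v : LaurentPolynomial ℤ) {n m : ℤ} (h : m < 0 ∨ n < m) :
    gaussZ v n m = 0 :=
  if_neg (by omega)

lemma gaussZ_zero_right (v : LaurentPolynomial ℤ) {n : ℤ} (hn : 0 ≤ n) :
    gaussZ v n 0 = 1 := by
  rw [gaussZ, if_pos ⟨le_rfl, hn⟩, Int.toNat_zero, gaussRec_zero_right]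

lemma gaussZ_succ_succ (e : ℤ) {n : ℤ} (m : ℤ) (hn : 0 ≤ n) :
    gaussZ (T e) (n + 1) (m + 1) =
      T ((m + 1) * e) * gaussZ (T e) n (m + 1) + gaussZ (T e) n m := by
  rcases lt_trichotomy m (-1) with hm | rfl | hm
  · simp [gaussZ_eq_zero _ (Or.inl (by omega : m < 0)),
      gaussZ_eq_zero _ (Or.inl (by omega : m + 1 < 0))]
  · simp [gaussZ_eq_zero _ (Or.inl (by omega : (-1 : ℤ) < 0)), gaussZ_zero_right, hn,
      (by omega : (0 : ℤ) ≤ n + 1)]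
  · lift n to ℕ using hn
    lift m to ℕ using (by omega)
    have := gaussRec_succ_succ (T e) n m
    simp only [← gaussZ_natCast, Nat.cast_add, Nat.cast_one, T_pow] at this
    rw [this]
    ring

lemma qbin_eq_zero {n m : ℤ} (h : m < 0 ∨ n < m) : qbin n m = 0 :=
  gaussZ_eq_zero _ h

lemma qbin_zero_right {n : ℤ} (hn : 0 ≤ n) : qbin n 0 = 1 :=
  gaussZ_zero_right _ hn

lemma finite_support_qbin (n : ℤ) : (Function.support (qbin n)).Finite :=
  (Set.finite_Icc 0 n).subset fun m hm => by
    by_contra h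
    exact hm (qbin_eq_zero (by simp only [Set.mem_Icc] at h; omega))

lemma qbin_succ_succ {n : ℤ} (m : ℤ) (hn : 0 ≤ n) :
    qbin (n + 1) (m + 1) = T (m + 1) * qbin n (m + 1) + qbin n m := by
  simpa [qbin] using gaussZ_succ_succ 1 m hn

lemma qbin_succ {n : ℤ} (m : ℤ) (hn : 0 ≤ n) :
    qbin (n + 1) m = qbin n m + T (n + 1 - m) * qbin n (m - 1) := by
  lift n to ℕ using hn
  rcases lt_trichotomy m 0 with hm | rfl | hm
  · simp [qbin_eq_zero (Or.inl hm), qbin_eq_zero (Or.inl (by omega : m - 1 < 0))]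
  · simp [qbin_zero_right, (by omega : (0 : ℤ) ≤ n + 1),
      qbin_eq_zero (Or.inl (by omega : (-1 : ℤ) < 0))]
  lift m to ℕ using hm.le
  obtain ⟨j, rfl⟩ : ∃ j, m = j + 1 := ⟨m - 1, by omega⟩
  rcases le_or_gt j n with hj | hj
  · have := gaussRec_succ_succ' (T 1) hj
    simp only [← gaussZ_natCast, Nat.cast_add, Nat.cast_one, Nat.cast_sub hj, T_pow,
      mul_one] at this
    push_cast [qbin, this]
    ring_nf
  · rw [qbin_eq_zero (Or.inr (by omega)), qbin_eq_zero (Or.inr (by omega)),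
      qbin_eq_zero (m := (j + 1 : ℕ) - 1) (Or.inr (by omega))]
    ring

lemma qbinPlus_of_nonneg {n : ℤ} (m : ℤ) (hn : 0 ≤ n) : qbinPlus n m = qbin n m := if_pos hn

def qbinPlusNeg (n m : ℤ) : LaurentPolynomial ℤ :=
  (-1) ^ (n - m).natAbs * T (-(((n - m) ^ 2 + (n - m)) / 2)) * gaussZ (T (-1)) (-m - 1) (-n - 1)

lemma qbinPlus_eq_qbinPlusNeg {n m : ℤ} (h : n < 0 ∨ m < 0) :
    qbinPlus n m = qbinPlusNeg n m := by
  rcases lt_or_ge n 0 with hn | hn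
  · exact if_neg (by omega)
  · rw [qbinPlus_of_nonneg m hn, qbin_eq_zero (by omega), qbinPlusNeg,
      gaussZ_eq_zero _ (Or.inl (by omega)), mul_zero]

lemma qbinPlus_eq_zero_of_lt {n m : ℤ} (h : n < m) : qbinPlus n m = 0 := by
  rcases lt_or_ge n 0 with hn | hn
  · rw [qbinPlus_eq_qbinPlusNeg (Or.inl hn), qbinPlusNeg, gaussZ_eq_zero _ (Or.inr (by omega)),
      mul_zero]
  · rw [qbinPlus_of_nonneg m hn, qbin_eq_zero (Or.inr h)]

lemma neg_one_pow_natAbs_sub_one {R : Type*} [Ring R] (d : ℤ) :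
    (-1 : R) ^ (d - 1).natAbs = -(-1) ^ d.natAbs := by
  rcases Int.even_or_odd d with hd | hd
  · rw [Even.neg_one_pow (Int.natAbs_even.mpr hd),
      Odd.neg_one_pow (Int.natAbs_odd.mpr (hd.sub_odd odd_one))]
  · rw [Odd.neg_one_pow (Int.natAbs_odd.mpr hd),
      Even.neg_one_pow (Int.natAbs_even.mpr (hd.sub_odd odd_one)), neg_neg]

lemma sub_one_sq_add_sub_one_div_two (d : ℤ) :
    ((d - 1) ^ 2 + (d - 1)) / 2 = (d ^ 2 + d) / 2 - d := by
  rw [show (d - 1) ^ 2 + (d - 1) = d ^ 2 + d + -d * 2 by ring,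
    Int.add_mul_ediv_right _ _ two_ne_zero]
  ring

lemma qbinPlusNeg_succ_succ (n : ℤ) {m : ℤ} (hm : m ≤ -2) :
    qbinPlusNeg (n + 1) (m + 1) = T (m + 1) * qbinPlusNeg n (m + 1) + qbinPlusNeg n m := by
  have pascal := gaussZ_succ_succ (-1) (-n - 2) (by omega : 0 ≤ -m - 2)
  rw [show -m - 2 + 1 = -m - 1 by ring, show -n - 2 + 1 = -n - 1 by ring] at pascal
  have sign := neg_one_pow_natAbs_sub_one (R := LaurentPolynomial ℤ) (n - m)
  have exponent : T (m + 1) * T (-(((n - m - 1) ^ 2 + (n - m - 1)) / 2)) =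
      (T (-(((n - m) ^ 2 + (n - m)) / 2)) * T ((-n - 1) * -1) : LaurentPolynomial ℤ) := by
    rw [← T_add, ← T_add, sub_one_sq_add_sub_one_div_two]
    ring_nf
  simp only [qbinPlusNeg, show n + 1 - (m + 1) = n - m by ring,
    show n - (m + 1) = n - m - 1 by ring, show -(m + 1) - 1 = -m - 2 by ring,
    show -(n + 1) - 1 = -n - 2 by ring, sign]
  linear_combination (-1) ^ (n - m).natAbs * gaussZ (T (-1)) (-m - 2) (-n - 1) * exponent
    - (-1) ^ (n - m).natAbs * T (-(((n - m) ^ 2 + (n - m)) / 2)) * pascal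

theorem qbinPlus_succ_succ (n m : ℤ) :
    qbinPlus (n + 1) (m + 1) = T (m + 1) * qbinPlus n (m + 1) + qbinPlus n m := by
  rcases le_or_gt 0 n with hn | hn
  · rw [qbinPlus_of_nonneg _ (by omega), qbinPlus_of_nonneg _ hn, qbinPlus_of_nonneg _ hn,
      qbin_succ_succ m hn]
  rcases le_or_gt m (-2) with hm | hm
  · rw [qbinPlus_eq_qbinPlusNeg (by omega), qbinPlus_eq_qbinPlusNeg (by omega),
      qbinPlus_eq_qbinPlusNeg (by omega), qbinPlusNeg_succ_succ n hm]
  rcases lt_or_ge n m with hnm | hnm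
  · rw [qbinPlus_eq_zero_of_lt (by omega), qbinPlus_eq_zero_of_lt (by omega),
      qbinPlus_eq_zero_of_lt hnm]
    ring
  obtain ⟨rfl, rfl⟩ : n = -1 ∧ m = -1 := by omega
  norm_num [qbinPlus, qbin, gaussZ, gaussRec]

def knuthSum (f : ℤ → LaurentPolynomial ℤ) (S a : ℤ) : LaurentPolynomial ℤ :=
  ∑ᶠ k : ℤ, T (k ^ 2 + a * k) * f (a + k) * qbin S k

lemma knuthSum_zero (f : ℤ → LaurentPolynomial ℤ) (a : ℤ) : knuthSum f 0 a = f a := by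
  rw [knuthSum, finsum_eq_single _ 0 fun k hk => by rw [qbin_eq_zero (by omega), mul_zero]]
  simp [qbin_zero_right]

lemma knuthSum_succ (f : ℤ → LaurentPolynomial ℤ) {S : ℤ} (a : ℤ) (hS : 0 ≤ S) :
    knuthSum f (S + 1) a = knuthSum f S a + T (S + a + 1) * knuthSum f S (a + 1) := by
  have finite (g : ℤ → LaurentPolynomial ℤ) :
      (Function.support fun k => g k * qbin S k).Finite :=
    (finite_support_qbin S).subset (Function.support_mul_subset_right _ _)
  have shifted :
      (∑ᶠ k : ℤ, T (k ^ 2 + a * k) * f (a + k) * (T (S + 1 - k) * qbin S (k - 1))) =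
        T (S + a + 1) * knuthSum f S (a + 1) := by
    rw [knuthSum, mul_finsum' _ _ (finite _), ← finsum_comp_equiv (Equiv.addRight (1 : ℤ))]
    refine finsum_congr fun k => ?_
    simp only [Equiv.coe_addRight, add_sub_cancel_right]
    have hT : (T ((k + 1) ^ 2 + a * (k + 1)) * T (S + 1 - (k + 1)) : LaurentPolynomial ℤ) =
        T (S + a + 1) * T (k ^ 2 + (a + 1) * k) := by
      rw [← T_add, ← T_add]
      ring_nf
    rw [show a + (k + 1) = a + 1 + k by ring]
    linear_combination f (a + 1 + k) * qbin S k * hT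
  rw [knuthSum, ← shifted, knuthSum, ← finsum_add_distrib (finite _) ?_]
  · exact finsum_congr fun k => by rw [qbin_succ k hS]; ring
  · refine ((finite_support_qbin S).preimage (sub_left_injective (b := (1 : ℤ))).injOn).subset
      fun k hk => ?_
    exact Function.support_mul_subset_right _ _ (Function.support_mul_subset_right _ _ hk)

theorem knuthSum_qbinPlus (M : ℤ) {S : ℤ} (hS : 0 ≤ S) (a : ℤ) :
    knuthSum (qbinPlus M) S a = qbinPlus (M + S) (S + a) := by
  induction S, hS using Int.leInduction generalizing a with
  | base => rw [knuthSum_zero, add_zero, zero_add]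
  | succ S hS ih =>
    rw [knuthSum_succ _ a hS, ih, ih, ← add_assoc M, add_right_comm S 1 a, ← add_assoc S a 1,
      qbinPlus_succ_succ]
    ring

/-- the Knuth-type identity for `S ≥ 0` and arbitrary `M`, with extended
q-binomial on the right. -/
theorem qbinPlus_knuth_ext (M S a : ℤ) (hS : 0 ≤ S) :
    (∑ᶠ k : ℤ, T (k ^ 2 + a * k) * qbinPlus M (a + k) * qbinPlus S k) =
      qbinPlus (M + S) (S + a) := by
  rw [← knuthSum_qbinPlus M hS a, knuthSum]
  exact finsum_congr fun k => by rw [qbinPlus_of_nonneg k hS]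

end
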